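/- arXiv:1506.04551 — 2 statements merged into one kernel-verified Lean document; each statement's English description precedes it below -/
import Mathlib

section
/- Let N ≥ 2, c > 0 and let R(t) = t - c t^N + c̃ t^{2N-1} with c̃ ∈ ℂ bounded. Set α = 1/(N-1). Then there exists a₀ > 0 such that for any 0 < a < a₀ there exists ρ' > 0 so that for all 0 < ρ < ρ' the complex sector V = { t ∈ ℂ : |arg t| ≤ a, 0 < |t| ≤ ρ } satisfies R(V) ⊆ V. -/
open Complex

set_option maxHeartbeats 1000000

/-- Forward invariance of a small complex sector around the positive real axis
under the parabolic normal form `R(t) = t - c t^N + c̃ t^{2N-1}`. -/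
theorem sector_invariance (N : ℕ) (hN : 2 ≤ N) (c : ℝ) (hc : 0 < c) (ctilde : ℂ) :
    ∃ a₀ > 0, ∀ a : ℝ, 0 < a → a < a₀ →
      ∃ ρ' > 0, ∀ ρ : ℝ, 0 < ρ → ρ < ρ' →
        ∀ t : ℂ, (|t.arg| ≤ a ∧ 0 < ‖t‖ ∧ ‖t‖ ≤ ρ) →
          (|(t - (c : ℂ) * t ^ N + ctilde * t ^ (2 * N - 1)).arg| ≤ a ∧
           0 < ‖t - (c : ℂ) * t ^ N + ctilde * t ^ (2 * N - 1)‖ ∧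
           ‖t - (c : ℂ) * t ^ N + ctilde * t ^ (2 * N - 1)‖ ≤ ρ) := by
  obtain ⟨m, rfl⟩ : ∃ m, N = m + 1 := ⟨N - 1, by omega⟩
  have hm : 1 ≤ m := by omega
  have hm0 : (1 : ℝ) ≤ (m : ℝ) := by exact_mod_cast hm
  have hπ : (3 : ℝ) < Real.pi := Real.pi_gt_three
  have hπ4 : Real.pi ≤ 4 := Real.pi_le_four
  set K : ℝ := c + ‖ctilde‖ with hKdef
  have hK0 : 0 < K := by positivity
  have hcK : c ≤ K := by
    have := norm_nonneg ctilde; linarith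
  have hctK : ‖ctilde‖ ≤ K := by rw [hKdef]; linarith
  clear_value K
  refine ⟨min (Real.pi / (3 * (m : ℝ))) 1, lt_min (by positivity) one_pos, ?_⟩
  intro a ha0 ha
  have ha1 : a < 1 := lt_of_lt_of_le ha (min_le_right _ _)
  have hma : (m : ℝ) * a < Real.pi / 3 := by
    have h := lt_of_lt_of_le ha (min_le_left _ _)
    rw [lt_div_iff₀ (by positivity)] at h
    nlinarith
  set s : ℝ := Real.sin ((m : ℝ) * (a / 2)) with hsdef
  have hs0 : 0 < s := by
    apply Real.sin_pos_of_pos_of_lt_pi (by positivity)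
    nlinarith
  have hs1 : s ≤ 1 := Real.sin_le_one _
  clear_value s
  set ε : ℝ := min (min (1 / (8 * K)) (a / (8 * K)))
      (min (c * s / K) (min ((c / 2) / (c ^ 2 / 16 + K ^ 2)) ((c / 4) / K))) with hεdef
  have hε0 : 0 < ε := by positivity
  have hε1 : K * ε ≤ 1 / 8 := by
    have h : ε ≤ 1 / (8 * K) := le_trans (min_le_left _ _) (min_le_left _ _)
    rw [le_div_iff₀ (by positivity)] at h; nlinarith
  have hε2 : K * ε ≤ a / 8 := by
    have h : ε ≤ a / (8 * K) := le_trans (min_le_left _ _) (min_le_right _ _)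
    rw [le_div_iff₀ (by positivity)] at h; nlinarith
  have hε3 : K * ε ≤ c * s := by
    have h : ε ≤ c * s / K := le_trans (min_le_right _ _) (min_le_left _ _)
    rw [le_div_iff₀ hK0] at h; nlinarith
  have hε4 : (c ^ 2 / 16 + K ^ 2) * ε ≤ c / 2 := by
    have h : ε ≤ (c / 2) / (c ^ 2 / 16 + K ^ 2) :=
      le_trans (min_le_right _ _) (le_trans (min_le_right _ _) (min_le_left _ _))
    rw [le_div_iff₀ (by positivity)] at h; nlinarith
  have hε5 : K * ε ≤ c / 4 := by
    have h : ε ≤ (c / 4) / K :=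
      le_trans (min_le_right _ _) (le_trans (min_le_right _ _) (min_le_right _ _))
    rw [le_div_iff₀ hK0] at h; nlinarith
  clear_value ε
  refine ⟨min ε 1, lt_min hε0 one_pos, ?_⟩
  intro ρ hρ0 hρ t ⟨hta, ht0, htρ⟩
  have htne : t ≠ 0 := by rintro rfl; simp at ht0
  set r : ℝ := ‖t‖ with hrdef
  set θ : ℝ := t.arg with hθdef
  clear_value r θ
  have hr0 : 0 < r := ht0
  have hrε : r < ε := lt_of_le_of_lt htρ (lt_of_lt_of_le hρ (min_le_left _ _))
  have hr1 : r < 1 := lt_of_le_of_lt htρ (lt_of_lt_of_le hρ (min_le_right _ _))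
  have hrm : r ^ m ≤ r := by
    simpa using pow_le_pow_of_le_one hr0.le hr1.le hm
  have hrmε : r ^ m ≤ ε := hrm.trans hrε.le
  have hrm0 : 0 < r ^ m := pow_pos hr0 m
  have hrm1 : r ^ m ≤ 1 := hrm.trans hr1.le
  -- polar form of t^m
  have hpow : t ^ m = ((r ^ m : ℝ) : ℂ) * Complex.exp ((((m : ℝ) * θ : ℝ)) * I) := by
    have h0 : t = ((r : ℝ) : ℂ) * Complex.exp ((θ : ℝ) * I) := by
      rw [hrdef, hθdef]; exact (Complex.norm_mul_exp_arg_mul_I t).symm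
    rw [h0, mul_pow, ← Complex.exp_nat_mul]
    push_cast
    ring_nf
  have htm_re : (t ^ m).re = r ^ m * Real.cos ((m : ℝ) * θ) := by
    rw [hpow, Complex.re_ofReal_mul, Complex.exp_ofReal_mul_I_re]
  have htm_im : (t ^ m).im = r ^ m * Real.sin ((m : ℝ) * θ) := by
    rw [hpow, Complex.im_ofReal_mul, Complex.exp_ofReal_mul_I_im]
  -- the factor w
  set w : ℂ := 1 - (c : ℂ) * t ^ m + ctilde * t ^ (2 * m) with hwdef
  clear_value w
  have hfact : t - (c : ℂ) * t ^ (m + 1) + ctilde * t ^ (2 * (m + 1) - 1) = t * w := by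
    have h2 : 2 * (m + 1) - 1 = 2 * m + 1 := by omega
    rw [h2, hwdef]; ring
  -- bounds on the perturbation term
  have habs2m : ‖ctilde * t ^ (2 * m)‖ = ‖ctilde‖ * r ^ (2 * m) := by
    rw [norm_mul, norm_pow, hrdef]
  have h2m_eps : r ^ (2 * m) ≤ ε * r ^ m := by
    have h : r ^ (2 * m) = r ^ m * r ^ m := by rw [← pow_add]; ring_nf
    rw [h]
    exact mul_le_mul_of_nonneg_right hrmε hrm0.le
  have hj_re : |(ctilde * t ^ (2 * m)).re| ≤ ‖ctilde‖ * r ^ (2 * m) := by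
    rw [← habs2m]; exact Complex.abs_re_le_norm _
  have hj_im : |(ctilde * t ^ (2 * m)).im| ≤ ‖ctilde‖ * r ^ (2 * m) := by
    rw [← habs2m]; exact Complex.abs_im_le_norm _
  have hj_key : ‖ctilde‖ * r ^ (2 * m) ≤ K * ε * r ^ m := by
    calc ‖ctilde‖ * r ^ (2 * m)
        ≤ ‖ctilde‖ * (ε * r ^ m) :=
          mul_le_mul_of_nonneg_left h2m_eps (norm_nonneg _)
      _ ≤ K * (ε * r ^ m) := mul_le_mul_of_nonneg_right hctK (by positivity)
      _ = K * ε * r ^ m := by ring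
  have hjre_eps : |(ctilde * t ^ (2 * m)).re| ≤ K * ε * r ^ m := hj_re.trans hj_key
  have hjim_eps : |(ctilde * t ^ (2 * m)).im| ≤ K * ε * r ^ m := hj_im.trans hj_key
  -- components of w
  have hwre : w.re = 1 - c * (r ^ m * Real.cos ((m : ℝ) * θ)) + (ctilde * t ^ (2 * m)).re := by
    rw [hwdef]
    simp [Complex.add_re, Complex.sub_re, Complex.one_re, Complex.re_ofReal_mul, htm_re]
  have hwim : w.im = -(c * (r ^ m * Real.sin ((m : ℝ) * θ))) + (ctilde * t ^ (2 * m)).im := by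
    rw [hwdef]
    simp [Complex.add_im, Complex.sub_im, Complex.one_im, Complex.im_ofReal_mul, htm_im]
  -- angle bounds
  have hθa : |θ| ≤ a := hta
  have hcosl : 1 / 2 ≤ Real.cos ((m : ℝ) * θ) := by
    have h1 : Real.cos ((m : ℝ) * θ) = Real.cos (|(m : ℝ) * θ|) := (Real.cos_abs _).symm
    have habs : |(m : ℝ) * θ| ≤ (m : ℝ) * a := by
      rw [abs_mul, _root_.abs_of_nonneg (by positivity : (0:ℝ) ≤ (m:ℝ))]
      exact mul_le_mul_of_nonneg_left hθa (by positivity)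
    rw [h1]
    have h2 : Real.cos (Real.pi / 3) ≤ Real.cos (|(m : ℝ) * θ|) :=
      Real.cos_le_cos_of_nonneg_of_le_pi (abs_nonneg _) (by linarith [Real.pi_pos])
        (by linarith)
    rwa [Real.cos_pi_div_three] at h2
  have hcosu : Real.cos ((m : ℝ) * θ) ≤ 1 := Real.cos_le_one _
  have hsin1 : |Real.sin ((m : ℝ) * θ)| ≤ 1 := abs_le.mpr ⟨Real.neg_one_le_sin _, Real.sin_le_one _⟩
  have h2m_one : r ^ (2 * m) ≤ r ^ m := by
    have h : r ^ (2 * m) = r ^ m * r ^ m := by rw [← pow_add]; ring_nf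
    rw [h]
    calc r ^ m * r ^ m ≤ 1 * r ^ m := mul_le_mul_of_nonneg_right hrm1 hrm0.le
      _ = r ^ m := one_mul _
  have hj_one : |(ctilde * t ^ (2 * m)).im| ≤ ‖ctilde‖ * r ^ m :=
    hj_im.trans (mul_le_mul_of_nonneg_left h2m_one (norm_nonneg _))
  have hKr : K * r ^ m = c * r ^ m + ‖ctilde‖ * r ^ m := by rw [hKdef]; ring
  have hKε1 : K * ε * r ^ m ≤ K * ε := by
    have h := mul_le_mul_of_nonneg_left hrm1 (mul_nonneg hK0.le hε0.le)
    simpa [mul_one] using h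
  -- lower bound on Re w
  have hwre_lb : 1 / 2 ≤ w.re := by
    rw [hwre]
    have h1 := abs_le.mp hjre_eps
    have h2 : c * (r ^ m * Real.cos ((m : ℝ) * θ)) ≤ c * r ^ m := by
      have h := mul_le_mul_of_nonneg_left
        (mul_le_mul_of_nonneg_left hcosu hrm0.le) hc.le
      simpa [mul_one] using h
    have h3 : c * r ^ m ≤ K * ε :=
      le_trans (mul_le_mul_of_nonneg_right hcK hrm0.le)
        (mul_le_mul_of_nonneg_left hrmε hK0.le)
    linarith
  -- upper bound on Re w
  have hwre_ub : w.re ≤ 1 - (c / 4) * r ^ m := by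
    rw [hwre]
    have h1 := abs_le.mp hjre_eps
    have h2 : c * (r ^ m * (1 / 2)) ≤ c * (r ^ m * Real.cos ((m : ℝ) * θ)) :=
      mul_le_mul_of_nonneg_left (mul_le_mul_of_nonneg_left hcosl hrm0.le) hc.le
    have h3 : K * ε * r ^ m ≤ (c / 4) * r ^ m := mul_le_mul_of_nonneg_right hε5 hrm0.le
    have h4 : c * (r ^ m * (1 / 2)) = (c / 2) * r ^ m := by ring
    linarith
  -- bound on Im w
  have hwim_abs : |w.im| ≤ K * r ^ m := by
    rw [hwim]
    have h2 : |c * (r ^ m * Real.sin ((m : ℝ) * θ))| ≤ c * r ^ m := by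
      rw [abs_mul, _root_.abs_of_pos hc, abs_mul, _root_.abs_of_nonneg hrm0.le]
      have h := mul_le_mul_of_nonneg_left
        (mul_le_mul_of_nonneg_left hsin1 hrm0.le) hc.le
      simpa [mul_one] using h
    have h3 := abs_le.mp h2
    have h5 := abs_le.mp hj_one
    rw [abs_le]
    constructor
    · rw [hKr]; linarith
    · rw [hKr]; linarith
  -- |w| ≥ re w ≥ 1/2 > 0
  have habsw_lb : 1 / 2 ≤ ‖w‖ := le_trans hwre_lb (Complex.re_le_norm w)
  have habsw_pos : 0 < ‖w‖ := by linarith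
  have hwne : w ≠ 0 := by
    intro h; rw [h] at habsw_pos; simp at habsw_pos
  -- |w| ≤ 1
  have hPP : r ^ m * r ^ m ≤ ε * r ^ m := mul_le_mul_of_nonneg_right hrmε hrm0.le
  have habsw_le1 : ‖w‖ ≤ 1 := by
    have hsq : ‖w‖ ^ 2 = w.re ^ 2 + w.im ^ 2 := by
      rw [Complex.sq_norm, Complex.normSq_apply]; ring
    have him2 : w.im ^ 2 ≤ K ^ 2 * (ε * r ^ m) := by
      have h1 : w.im ^ 2 ≤ (K * r ^ m) ^ 2 := by
        have h0 : |w.im| ^ 2 ≤ (K * r ^ m) ^ 2 :=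
          pow_le_pow_left₀ (abs_nonneg _) hwim_abs 2
        rwa [_root_.sq_abs] at h0
      have h2 : K ^ 2 * (r ^ m * r ^ m) ≤ K ^ 2 * (ε * r ^ m) :=
        mul_le_mul_of_nonneg_left hPP (sq_nonneg K)
      have h3 : (K * r ^ m) ^ 2 = K ^ 2 * (r ^ m * r ^ m) := by ring
      linarith
    have hre2 : w.re ^ 2 ≤ 1 - (c / 2) * r ^ m + (c ^ 2 / 16) * (ε * r ^ m) := by
      have h1 : w.re ^ 2 ≤ (1 - (c / 4) * r ^ m) ^ 2 :=
        pow_le_pow_left₀ (by linarith) hwre_ub 2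
      have h2 : (1 - (c / 4) * r ^ m) ^ 2
          = 1 - (c / 2) * r ^ m + (c ^ 2 / 16) * (r ^ m * r ^ m) := by ring
      have h3 : (c ^ 2 / 16) * (r ^ m * r ^ m) ≤ (c ^ 2 / 16) * (ε * r ^ m) :=
        mul_le_mul_of_nonneg_left hPP (by positivity)
      linarith
    have hsum : ‖w‖ ^ 2 ≤ 1 := by
      rw [hsq]
      have h5 : (c ^ 2 / 16 + K ^ 2) * ε * r ^ m ≤ (c / 2) * r ^ m :=
        mul_le_mul_of_nonneg_right hε4 hrm0.le
      have h6 : (c ^ 2 / 16 + K ^ 2) * ε * r ^ m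
          = (c ^ 2 / 16) * (ε * r ^ m) + K ^ 2 * (ε * r ^ m) := by ring
      linarith
    by_contra hgt
    push_neg at hgt
    have h7 : 1 < ‖w‖ ^ 2 := one_lt_pow₀ hgt two_ne_zero
    linarith
  -- bound |arg w| ≤ a/2
  have hargw : |w.arg| ≤ a / 2 := by
    have hre_nn : 0 ≤ w.re := by linarith
    have hhalf : |w.arg| ≤ Real.pi / 2 := Complex.abs_arg_le_pi_div_two_iff.mpr hre_nn
    have hsin : Real.sin w.arg = w.im / ‖w‖ := Complex.sin_arg w
    have hsinb : |Real.sin w.arg| ≤ 2 * (K * r ^ m) := by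
      rw [hsin, abs_div, _root_.abs_of_pos habsw_pos, div_le_iff₀ habsw_pos]
      have h6 : 2 * (K * r ^ m) * (1 / 2) ≤ 2 * (K * r ^ m) * ‖w‖ :=
        mul_le_mul_of_nonneg_left habsw_lb (by positivity)
      have h7 : 2 * (K * r ^ m) * (1 / 2) = K * r ^ m := by ring
      linarith [hwim_abs]
    have hkey : 2 / Real.pi * |w.arg| ≤ |Real.sin w.arg| := by
      have h1 : 2 / Real.pi * |w.arg| ≤ Real.sin |w.arg| :=
        Real.mul_le_sin (abs_nonneg _) hhalf
      rcases le_or_gt 0 w.arg with h | h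
      · rw [_root_.abs_of_nonneg h] at h1 ⊢
        exact h1.trans (le_abs_self _)
      · rw [_root_.abs_of_neg h, Real.sin_neg] at h1
        rw [_root_.abs_of_neg h]
        exact h1.trans (neg_le_abs _)
    have hπ0 : (0:ℝ) < Real.pi := by linarith
    have h3 := hkey.trans hsinb
    have h4 : K * r ^ m ≤ K * ε := mul_le_mul_of_nonneg_left hrmε hK0.le
    calc |w.arg| = (Real.pi / 2) * (2 / Real.pi * |w.arg|) := by field_simp
      _ ≤ (Real.pi / 2) * (2 * (K * r ^ m)) := mul_le_mul_of_nonneg_left h3 (by positivity)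
      _ = Real.pi * (K * r ^ m) := by ring
      _ ≤ 4 * (K * r ^ m) :=
          mul_le_mul_of_nonneg_right hπ4 (mul_nonneg hK0.le hrm0.le)
      _ ≤ 4 * (K * ε) := by linarith
      _ ≤ a / 2 := by linarith
  -- arg of product
  have hargmul : (t * w).arg = θ + w.arg := by
    rw [hθdef]
    refine Complex.arg_mul htne hwne ?_
    rw [← hθdef, Set.mem_Ioc]
    have h12 := abs_le.mp hθa
    have h13 := abs_le.mp hargw
    constructor
    · linarith [h12.1, h13.1]
    · linarith [h12.2, h13.2]
  -- final arg bound
  have hfinal_arg : |θ + w.arg| ≤ a := by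
    rcases le_or_gt |θ| (a / 2) with hcase | hcase
    · calc |θ + w.arg| ≤ |θ| + |w.arg| := abs_add_le _ _
        _ ≤ a := by linarith
    · rcases le_or_gt 0 θ with hsgn | hsgn
      · -- a/2 < θ ≤ a : show w.im ≤ 0 hence arg w ≤ 0
        have hθl : a / 2 < θ := by rwa [_root_.abs_of_nonneg hsgn] at hcase
        have hθu : θ ≤ a := (abs_le.mp hθa).2
        have hsinl : s ≤ Real.sin ((m : ℝ) * θ) := by
          rw [hsdef]
          apply Real.sin_le_sin_of_le_of_le_pi_div_two
          · have h8 : (0:ℝ) ≤ (m:ℝ) * (a / 2) := by positivity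
            linarith [Real.pi_pos]
          · have h8 : (m : ℝ) * θ ≤ (m : ℝ) * a :=
              mul_le_mul_of_nonneg_left hθu (by positivity)
            linarith
          · exact mul_le_mul_of_nonneg_left hθl.le (by positivity)
        have hwim_np : w.im ≤ 0 := by
          rw [hwim]
          have h1 := (abs_le.mp hjim_eps).2
          have h2 : K * ε * r ^ m ≤ c * s * r ^ m := mul_le_mul_of_nonneg_right hε3 hrm0.le
          have h9 : c * (r ^ m * s) ≤ c * (r ^ m * Real.sin ((m : ℝ) * θ)) :=
            mul_le_mul_of_nonneg_left (mul_le_mul_of_nonneg_left hsinl hrm0.le) hc.le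
          have h10 : c * (r ^ m * s) = c * s * r ^ m := by ring
          linarith
        have hargw_np : w.arg ≤ 0 := by
          by_contra h
          push_neg at h
          have h1 : 0 ≤ w.im := Complex.arg_nonneg_iff.mp h.le
          have h2 : w.im = 0 := le_antisymm hwim_np h1
          have h3 : Real.sin w.arg = 0 := by
            rw [Complex.sin_arg, h2, zero_div]
          have h4 : 0 < Real.sin w.arg := by
            apply Real.sin_pos_of_pos_of_lt_pi h
            have h11 := (abs_le.mp hargw).2
            linarith
          linarith
        have := (abs_le.mp hargw).1
        rw [abs_le]
        constructor <;> linarith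
      · -- -a ≤ θ < -a/2 : show w.im ≥ 0 hence arg w ≥ 0
        have hθl : θ < -(a / 2) := by
          rw [_root_.abs_of_neg hsgn] at hcase; linarith
        have hθu : -a ≤ θ := (abs_le.mp hθa).1
        have hsinl : Real.sin ((m : ℝ) * θ) ≤ -s := by
          have h1 : s ≤ Real.sin ((m : ℝ) * (-θ)) := by
            rw [hsdef]
            apply Real.sin_le_sin_of_le_of_le_pi_div_two
            · have h8 : (0:ℝ) ≤ (m:ℝ) * (a / 2) := by positivity
              linarith [Real.pi_pos]
            · have h8 : (m : ℝ) * (-θ) ≤ (m : ℝ) * a :=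
                mul_le_mul_of_nonneg_left (by linarith) (by positivity)
              linarith
            · exact mul_le_mul_of_nonneg_left (by linarith) (by positivity)
          have h2 : Real.sin ((m : ℝ) * (-θ)) = -Real.sin ((m : ℝ) * θ) := by
            rw [show (m : ℝ) * (-θ) = -((m : ℝ) * θ) by ring, Real.sin_neg]
          linarith [h2 ▸ h1]
        have hwim_nn : 0 ≤ w.im := by
          rw [hwim]
          have h1 := (abs_le.mp hjim_eps).1
          have h2 : K * ε * r ^ m ≤ c * s * r ^ m := mul_le_mul_of_nonneg_right hε3 hrm0.le
          have h9 : c * (r ^ m * Real.sin ((m : ℝ) * θ)) ≤ c * (r ^ m * (-s)) :=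
            mul_le_mul_of_nonneg_left (mul_le_mul_of_nonneg_left hsinl hrm0.le) hc.le
          have h10 : c * (r ^ m * (-s)) = -(c * s * r ^ m) := by ring
          linarith
        have hargw_nn : 0 ≤ w.arg := Complex.arg_nonneg_iff.mpr hwim_nn
        have := (abs_le.mp hargw).2
        rw [abs_le]
        constructor <;> linarith
  -- conclude
  rw [hfact]
  refine ⟨by rw [hargmul]; exact hfinal_arg, ?_, ?_⟩
  · rw [norm_mul, ← hrdef]
    exact mul_pos hr0 habsw_pos
  · rw [norm_mul, ← hrdef]
    calc r * ‖w‖ ≤ r * 1 :=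
        mul_le_mul_of_nonneg_left habsw_le1 hr0.le
      _ = r := mul_one _
      _ ≤ ρ := htρ
end

section
/- Let N ≥ 2, α = 1/(N-1), b > 0, and define the sequence b_i by b₀^{N-1} = α/b and the recursion b_{i+1}/(s+i+1)^α = R_b(b_i/(s+i)^α) where R_b(r) = r - b r^N and s > 0 is chosen so that b₀/s^α is in the domain where R_b is increasing and positive. Then for every 0 < β < 1, b_i = b₀(1 + O(i^{-β})) as i → ∞; in particular b_i → b₀. -/
/-!
Write `m = N - 1` and `r_i = b_i / (s + i)^α`, so that `r_{i+1} = r_i - b r_i^(m+1)`. The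
quantity `x_i = b r_i^m` is then an orbit of `x ↦ x (1 - x)^m`, for which
`1/x_{i+1} = 1/x_i + m + O(x_i)`. Summing, `1/x_n = m n + O(log n)` since `x_i ≤ 1/(m (i+1))`,
so `m (s + n) x_n = 1 + O(log n / n)`. This quantity is exactly `(b_n / b₀)^m`, and taking
`m`-th roots only shrinks the distance to `1`; finally `log n / n = O(n^(-β))` for `β < 1`.
-/

open Filter Finset Real

lemma lt_one_of_natCast_add_one_mul_lt_one {m : ℕ} {x : ℝ} (h0 : 0 ≤ x)
    (h : (m + 1) * x < 1) : x < 1 := by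
  nlinarith [mul_nonneg m.cast_nonneg h0]

lemma abs_sub_one_le_abs_pow_sub_one {z : ℝ} (hz : 0 ≤ z) {m : ℕ} (hm : m ≠ 0) :
    |z - 1| ≤ |z ^ m - 1| := by
  rcases le_total 1 z with h | h
  · rw [abs_of_nonneg (by linarith), abs_of_nonneg (by linarith [one_le_pow₀ (n := m) h])]
    linarith [le_self_pow₀ h hm]
  · rw [abs_of_nonpos (by linarith), abs_of_nonpos (by linarith [pow_le_one₀ (n := m) hz h])]
    linarith [pow_le_of_le_one hz h hm]

lemma add_mul_log_div_le_rpow_neg {A L β y : ℝ} (hA : 0 ≤ A) (hL : 0 ≤ L) (hβ : β < 1)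
    (hy : 1 ≤ y) : (A + L * log y) / y ≤ (A + L / (1 - β)) * y ^ (-β) := by
  have hy0 : 0 < y := by linarith
  have hβ' : 0 < 1 - β := by linarith
  have hlog : log y ≤ y ^ (1 - β) / (1 - β) := log_le_rpow_div hy0.le hβ'
  have hsplit : y ^ (1 - β) = y * y ^ (-β) := by
    rw [sub_eq_add_neg, rpow_add hy0, rpow_one]
  have hinv : y⁻¹ ≤ y ^ (-β) := by
    rw [← rpow_neg_one]; exact rpow_le_rpow_of_exponent_le hy (by linarith)
  calc (A + L * log y) / y ≤ (A + L * (y * y ^ (-β) / (1 - β))) / y := by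
        rw [← hsplit]; gcongr
    _ = A * y⁻¹ + L / (1 - β) * y ^ (-β) := by field_simp
    _ ≤ A * y ^ (-β) + L / (1 - β) * y ^ (-β) := by gcongr
    _ = (A + L / (1 - β)) * y ^ (-β) := by ring

lemma tendsto_of_abs_sub_le_rpow_neg {u : ℕ → ℝ} {a C β : ℝ} (hβ : 0 < β)
    (h : ∀ n : ℕ, 1 ≤ n → |u n - a| ≤ C * (n : ℝ) ^ (-β)) :
    Tendsto u atTop (nhds a) := by
  rw [← tendsto_sub_nhds_zero_iff]
  refine squeeze_zero_norm' ?_ (by simpa using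
    ((tendsto_rpow_neg_atTop hβ).comp tendsto_natCast_atTop_atTop).const_mul C)
  filter_upwards [eventually_ge_atTop 1] with n hn
  exact h n hn

lemma mul_pow_lt_one_of_lt_rpow {m : ℕ} (hm : m ≠ 0) {c r : ℝ} (hc : 0 < c) (hr : 0 ≤ r)
    (h : r < c ^ (-1 / m : ℝ)) : c * r ^ m < 1 := by
  have hpow : (c ^ (-1 / m : ℝ)) ^ m = c⁻¹ := by
    rw [← rpow_natCast, ← rpow_mul hc.le, div_mul_cancel₀ _ (by exact_mod_cast hm),
      rpow_neg_one]
  calc c * r ^ m < c * (c ^ (-1 / m : ℝ)) ^ m := by gcongr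
    _ = 1 := by rw [hpow, mul_inv_cancel₀ hc.ne']

lemma one_sub_pow_mul_one_add_mul_le_one (m : ℕ) {x : ℝ} (h0 : 0 ≤ x) (h1 : x ≤ 1) :
    (1 - x) ^ m * (1 + m * x) ≤ 1 :=
  calc (1 - x) ^ m * (1 + m * x) ≤ (1 - x) ^ m * (1 + x) ^ m := by
        have := sub_nonneg.2 h1
        gcongr
        exact one_add_mul_le_pow (by linarith) m
    _ = (1 - x ^ 2) ^ m := by rw [← mul_pow]; ring
    _ ≤ 1 := pow_le_one₀ (by nlinarith) (by nlinarith)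

lemma one_le_one_sub_pow_mul (m : ℕ) {x : ℝ} (h0 : 0 ≤ x) (h1 : (m + 1) * x ≤ 1) :
    1 ≤ (1 - x) ^ m * (1 + m * x + m ^ 2 * (m + 1) * x ^ 2) := by
  have bernoulli : 1 - m * x ≤ (1 - x) ^ m := by
    simpa [sub_eq_add_neg] using one_add_mul_le_pow (a := -x) (by nlinarith) m
  have hm : (0 : ℝ) ≤ m := m.cast_nonneg
  have hmx : 0 ≤ 1 - m * x := by linarith
  calc (1 : ℝ) ≤ (1 - m * x) * (1 + m * x + m ^ 2 * (m + 1) * x ^ 2) := by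
        have : 0 ≤ m ^ 3 * x ^ 2 * (1 - (m + 1) * x) := by
          have := sub_nonneg.2 h1; positivity
        nlinarith
    _ ≤ (1 - x) ^ m * (1 + m * x + m ^ 2 * (m + 1) * x ^ 2) := by gcongr

lemma inv_add_le_inv_mul_one_sub_pow (m : ℕ) {x : ℝ} (h0 : 0 < x) (h1 : x < 1) :
    x⁻¹ + m ≤ (x * (1 - x) ^ m)⁻¹ := by
  have hpos : 0 < x * (1 - x) ^ m := by have := sub_pos.2 h1; positivity
  rw [le_inv_comm₀ (by positivity) hpos, ← one_div, ← one_div, div_add' _ _ _ h0.ne',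
    one_div_div, le_div_iff₀ (by positivity)]
  nlinarith [one_sub_pow_mul_one_add_mul_le_one m h0.le h1.le]

lemma inv_mul_one_sub_pow_le (m : ℕ) {x : ℝ} (h0 : 0 < x) (h1 : (m + 1) * x < 1) :
    (x * (1 - x) ^ m)⁻¹ ≤ x⁻¹ + m + m ^ 2 * (m + 1) * x := by
  have hpos : 0 < x * (1 - x) ^ m :=
    mul_pos h0 (pow_pos (sub_pos.2 (lt_one_of_natCast_add_one_mul_lt_one h0.le h1)) m)
  rw [inv_le_iff_one_le_mul₀ hpos]
  calc (1 : ℝ) ≤ (1 - x) ^ m * (1 + m * x + m ^ 2 * (m + 1) * x ^ 2) :=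
        one_le_one_sub_pow_mul m h0.le h1.le
    _ = (x⁻¹ + m + m ^ 2 * (m + 1) * x) * (x * (1 - x) ^ m) := by field_simp

section Orbit

variable {m : ℕ} {x : ℕ → ℝ} (hx : ∀ i, x (i + 1) = x i * (1 - x i) ^ m)
  (h0 : 0 < x 0) (h1 : (m + 1) * x 0 < 1)
include hx h0 h1

lemma orbit_pos_and_lt (i : ℕ) : 0 < x i ∧ (m + 1) * x i < 1 := by
  induction i with
  | zero => exact ⟨h0, h1⟩
  | succ i ih =>
    obtain ⟨hpos, hlt⟩ := ih
    have hlt1 := lt_one_of_natCast_add_one_mul_lt_one hpos.le hlt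
    have hpow : (1 - x i) ^ m ≤ 1 := pow_le_one₀ (by linarith) (by linarith)
    rw [hx]
    refine ⟨mul_pos hpos (pow_pos (sub_pos.2 hlt1) m), ?_⟩
    calc ((m : ℝ) + 1) * (x i * (1 - x i) ^ m) ≤ (m + 1) * x i := by
          gcongr; exact mul_le_of_le_one_right hpos.le hpow
      _ < 1 := hlt

lemma inv_orbit_ge (i : ℕ) : (x 0)⁻¹ + m * i ≤ (x i)⁻¹ := by
  induction i with
  | zero => simp
  | succ i ih =>
    obtain ⟨hpos, hlt⟩ := orbit_pos_and_lt hx h0 h1 i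
    rw [hx]
    push_cast
    linarith [inv_add_le_inv_mul_one_sub_pow m hpos
      (lt_one_of_natCast_add_one_mul_lt_one hpos.le hlt)]

lemma inv_orbit_le (i : ℕ) :
    (x i)⁻¹ ≤ (x 0)⁻¹ + m * i + m ^ 2 * (m + 1) * ∑ j ∈ range i, x j := by
  induction i with
  | zero => simp
  | succ i ih =>
    obtain ⟨hpos, hlt⟩ := orbit_pos_and_lt hx h0 h1 i
    rw [hx, sum_range_succ]
    push_cast
    linarith [inv_mul_one_sub_pow_le m hpos hlt]

lemma mul_sum_orbit_le_one_add_log (n : ℕ) : m * ∑ j ∈ range n, x j ≤ 1 + log n := by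
  have hterm : ∀ j, m * x j ≤ ((j + 1 : ℕ) : ℝ)⁻¹ := by
    intro j
    have hpos := (orbit_pos_and_lt hx h0 h1 j).1
    have hx0 : (m : ℝ) + 1 ≤ (x 0)⁻¹ := by
      rw [← one_div, le_div_iff₀ h0]; exact h1.le
    have hinv : (m : ℝ) * (j + 1) ≤ (x j)⁻¹ := by linarith [inv_orbit_ge hx h0 h1 j]
    have := mul_le_mul_of_nonneg_right hinv hpos.le
    rw [inv_mul_cancel₀ hpos.ne'] at this
    rw [Nat.cast_add_one, ← one_div, le_div_iff₀ (by positivity)]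
    linarith
  calc m * ∑ j ∈ range n, x j = ∑ j ∈ range n, m * x j := mul_sum _ _ _
    _ ≤ ∑ j ∈ range n, ((j + 1 : ℕ) : ℝ)⁻¹ := sum_le_sum fun j _ => hterm j
    _ = harmonic n := by simp [harmonic]
    _ ≤ 1 + log n := harmonic_le_one_add_log n

lemma abs_mul_orbit_sub_one_le (hm : 0 < m) {s : ℝ} (hs : 0 ≤ s) {n : ℕ} (hn : 1 ≤ n) :
    |m * (s + n) * x n - 1| ≤ (s + (x 0)⁻¹ / m + (m + 1) + (m + 1) * log n) / n := by
  have hpos := (orbit_pos_and_lt hx h0 h1 n).1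
  have hm' : (0 : ℝ) < m := by exact_mod_cast hm
  have hn' : (1 : ℝ) ≤ n := by exact_mod_cast hn
  have hlog : 0 ≤ log n := log_nonneg hn'
  have hinv0 : 0 < (x 0)⁻¹ := inv_pos.2 h0
  have hlow : (x 0)⁻¹ + m * n ≤ (x n)⁻¹ := inv_orbit_ge hx h0 h1 n
  have hup : (x n)⁻¹ ≤ (x 0)⁻¹ + m * n + m * (m + 1) * (1 + log n) := by
    have hsum : (m : ℝ) ^ 2 * (m + 1) * ∑ j ∈ range n, x j ≤ m * (m + 1) * (1 + log n) :=
      calc _ = m * (m + 1) * (m * ∑ j ∈ range n, x j) := by ring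
        _ ≤ _ := by gcongr; exact mul_sum_orbit_le_one_add_log hx h0 h1 n
    linarith [inv_orbit_le hx h0 h1 n]
  set v := (x n)⁻¹
  have hv : m * n ≤ v := by linarith
  have hvpos : 0 < v := by positivity
  have heq : m * (s + n) * x n - 1 = (m * (s + n) - v) / v := by
    simp only [v]; field_simp
  have hnum : |m * (s + n) - v| ≤ m * (s + (x 0)⁻¹ / m + (m + 1) + (m + 1) * log n) := by
    have hexpand : m * (s + (x 0)⁻¹ / m + (m + 1) + (m + 1) * log n)
        = m * s + (x 0)⁻¹ + m * (m + 1) * (1 + log n) := by field_simp; ring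
    have : 0 ≤ m * s := by positivity
    rw [abs_sub_le_iff, hexpand]
    constructor <;> nlinarith
  calc |m * (s + n) * x n - 1| = |m * (s + n) - v| / v := by rw [heq, abs_div, abs_of_pos hvpos]
    _ ≤ m * (s + (x 0)⁻¹ / m + (m + 1) + (m + 1) * log n) / (m * n) :=
        div_le_div₀ (by positivity) hnum (by positivity) hv
    _ = _ := mul_div_mul_left _ _ hm'.ne'

end Orbit

lemma parabolic_rescale_succ {m : ℕ} {b : ℝ} {r : ℕ → ℝ}
    (hr : ∀ i, r (i + 1) = r i - b * r i ^ (m + 1)) (i : ℕ) :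
    b * r (i + 1) ^ m = b * r i ^ m * (1 - b * r i ^ m) ^ m := by
  rw [hr, show r i - b * r i ^ (m + 1) = r i * (1 - b * r i ^ m) by ring, mul_pow]; ring

lemma parabolic_orbit_pos {m : ℕ} {b : ℝ} (hb : 0 < b) {r : ℕ → ℝ}
    (hr : ∀ i, r (i + 1) = r i - b * r i ^ (m + 1)) (h0 : 0 < r 0)
    (h1 : (m + 1) * (b * r 0 ^ m) < 1) (i : ℕ) : 0 < r i := by
  induction i with
  | zero => exact h0
  | succ i ih =>
    obtain ⟨hx0, hx1⟩ := orbit_pos_and_lt (x := fun i => b * r i ^ m)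
      (parabolic_rescale_succ hr) (by positivity) h1 i
    rw [hr, show r i - b * r i ^ (m + 1) = r i * (1 - b * r i ^ m) by ring]
    exact mul_pos ih (sub_pos.2 (lt_one_of_natCast_add_one_mul_lt_one hx0.le hx1))

lemma abs_sub_le_of_rescaled_parabolic {m : ℕ} (hm : 0 < m) {b b₀ s : ℝ} (hb : 0 < b)
    (hb₀ : 0 < b₀) (hs : 0 < s) (hb₀m : m * b * b₀ ^ m = 1) {u : ℕ → ℝ}
    (hu : ∀ i : ℕ, u (i + 1) / (s + i + 1) ^ (m⁻¹ : ℝ) =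
      u i / (s + i) ^ (m⁻¹ : ℝ) - b * (u i / (s + i) ^ (m⁻¹ : ℝ)) ^ (m + 1))
    (h0 : 0 < u 0) (hdom : (m + 1) * (b * (u 0 / s ^ (m⁻¹ : ℝ)) ^ m) < 1) :
    ∃ A ≥ 0, ∀ n : ℕ, 1 ≤ n → |u n - b₀| ≤ b₀ * ((A + (m + 1) * log n) / n) := by
  set r : ℕ → ℝ := fun i => u i / (s + i) ^ (m⁻¹ : ℝ)
  have hr : ∀ i, r (i + 1) = r i - b * r i ^ (m + 1) := fun i => by
    simpa [r, add_assoc] using hu i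
  have hr0 : 0 < r 0 := by simp only [r]; positivity
  have hdom' : (m + 1) * (b * r 0 ^ m) < 1 := by simpa [r] using hdom
  have hx := parabolic_rescale_succ hr
  refine ⟨s + (b * r 0 ^ m)⁻¹ / m + (m + 1), by positivity, fun n hn => ?_⟩
  have hsn : 0 < s + n := by positivity
  have hun : u n = r n * (s + n) ^ (m⁻¹ : ℝ) := by simp only [r]; field_simp
  have hupos : 0 < u n := by rw [hun]; have := parabolic_orbit_pos hb hr hr0 hdom' n; positivity
  have hpow : (u n / b₀) ^ m = m * (s + n) * (b * r n ^ m) := by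
    rw [div_pow, hun, mul_pow, rpow_inv_natCast_pow hsn.le hm.ne', div_eq_iff (by positivity)]
    linear_combination -(r n ^ m * (s + n)) * hb₀m
  calc |u n - b₀| = b₀ * |u n / b₀ - 1| := by
        rw [← abs_of_pos hb₀, ← abs_mul, abs_of_pos hb₀, mul_sub,
          mul_div_cancel₀ _ hb₀.ne', mul_one]
    _ ≤ b₀ * |(u n / b₀) ^ m - 1| :=
        mul_le_mul_of_nonneg_left (abs_sub_one_le_abs_pow_sub_one (by positivity) hm.ne') hb₀.le
    _ ≤ b₀ * ((s + (b * r 0 ^ m)⁻¹ / m + (m + 1) + (m + 1) * log n) / n) := by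
        rw [hpow]; gcongr
        exact abs_mul_orbit_sub_one_le (x := fun i => b * r i ^ m) hx (by positivity) hdom' hm
          hs.le hn

/-- Asymptotics of the bounding sequence `b_i` for the one-dimensional parabolic
map `R_b(r) = r - b r^N`: for every `0 < β < 1`, `b_i = b₀(1 + O(i^{-β}))`; in
particular `b_i → b₀`. -/
theorem bseq_asymptotics (N : ℕ) (hN : 2 ≤ N) (b b₀ s : ℝ)
    (hb : 0 < b) (hb₀ : 0 < b₀) (hs : 0 < s)
    (α : ℝ) (hα : α = 1 / ((N : ℝ) - 1))
    (hb₀def : b₀ ^ (N - 1) = α / b)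
    (hdom : 0 < b₀ / s ^ α ∧
      b₀ / s ^ α < ((N : ℝ) * b) ^ (-(1 : ℝ) / ((N : ℝ) - 1)))
    (bseq : ℕ → ℝ) (hbseq0 : bseq 0 = b₀)
    (hbrec : ∀ i : ℕ,
      bseq (i + 1) / (s + (i : ℝ) + 1) ^ α =
        bseq i / (s + (i : ℝ)) ^ α - b * (bseq i / (s + (i : ℝ)) ^ α) ^ N) :
    ∀ β : ℝ, 0 < β → β < 1 →
      (∃ C > 0, ∀ i : ℕ, 1 ≤ i → |bseq i - b₀| ≤ C * b₀ * (i : ℝ) ^ (-β)) ∧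
      Tendsto bseq atTop (nhds b₀) := by
  obtain ⟨m, rfl⟩ : ∃ m, N = m + 1 := ⟨N - 1, by omega⟩
  have hm : 0 < m := by omega
  have hNm : ((m + 1 : ℕ) : ℝ) - 1 = m := by push_cast; ring
  rw [hNm, ← inv_eq_one_div] at hα
  subst hα
  have hb₀m : m * b * b₀ ^ m = 1 := by
    rw [Nat.add_sub_cancel] at hb₀def; rw [hb₀def]; field_simp
  have hdom' : (m + 1) * (b * (bseq 0 / s ^ (m⁻¹ : ℝ)) ^ m) < 1 := by
    rw [hNm] at hdom; push_cast at hdom; rw [hbseq0, ← mul_assoc]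
    exact mul_pow_lt_one_of_lt_rpow hm.ne' (by positivity) hdom.1.le hdom.2
  obtain ⟨A, hA, hbound⟩ := abs_sub_le_of_rescaled_parabolic hm hb hb₀ hs hb₀m hbrec
    (hbseq0 ▸ hb₀) hdom'
  have hrate : ∀ β < 1, ∀ n : ℕ, 1 ≤ n →
      |bseq n - b₀| ≤ (A + (m + 1) / (1 - β)) * b₀ * (n : ℝ) ^ (-β) := fun β hβ n hn =>
    (hbound n hn).trans <| by
      rw [mul_right_comm, mul_comm _ b₀]
      exact mul_le_mul_of_nonneg_left (add_mul_log_div_le_rpow_neg hA (by positivity) hβ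
        (by exact_mod_cast hn)) hb₀.le
  refine fun β _ hβ => ⟨⟨_, ?_, hrate β hβ⟩, tendsto_of_abs_sub_le_rpow_neg one_half_pos
    (hrate _ one_half_lt_one)⟩
  have : 0 < 1 - β := by linarith
  positivity
end
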